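/- arXiv:1508.06381 — 5 statements merged into one kernel-verified Lean document; each statement's English description precedes it below -/
import Mathlib

section
/- Suppose rank(HG) = K, where H ∈ ℂ^{K×N_r} is the matrix whose k-th row is h_kᴴ. Then for every choice of finite SINR targets γ_1,…,γ_K > 0 and EH targets ψ_1,…,ψ_K > 0, the power-minimization problem is feasible: there exist beamformers f_1,…,f_K ∈ ℂ^{N_t}, a relay matrix W ∈ ℂ^{N_r×N_r}, and power-splitting ratios ρ_1,…,ρ_K ∈ (0,1) such that Γ_k ≥ γ_k and P_k^EH ≥ ψ_k for all k = 1,…,K. -/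
open Matrix Finset

/-- Lemma 1: if rank(HG) = K, where the k-th row of H is h_kᴴ, then for any finite
positive SINR targets γ_k and EH targets ψ_k the joint power-minimization problem is
feasible: there exist beamformers f_k, a relay matrix W, and power-splitting ratios
ρ_k ∈ (0,1) meeting all SINR and EH constraints. -/
theorem lemma1_feasibility
    (K Nt Nr : ℕ) (hK : 1 ≤ K) (hNt : 1 ≤ Nt) (hNr : 1 ≤ Nr)
    (G : Matrix (Fin Nr) (Fin Nt) ℂ)
    (h : Fin K → (Fin Nr → ℂ))
    (σr : ℝ) (hσr : 0 < σr)
    (σ ω ξ : Fin K → ℝ)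
    (hσ : ∀ k, 0 < σ k) (hω : ∀ k, 0 < ω k)
    (hξ : ∀ k, 0 < ξ k ∧ ξ k ≤ 1)
    (hrank : ((Matrix.of fun (k : Fin K) (i : Fin Nr) => star (h k i)) * G).rank = K)
    (γ ψ : Fin K → ℝ) (hγ : ∀ k, 0 < γ k) (hψ : ∀ k, 0 < ψ k) :
    ∃ (f : Fin K → (Fin Nt → ℂ)) (W : Matrix (Fin Nr) (Fin Nr) ℂ) (ρ : Fin K → ℝ),
      (∀ k, ρ k ∈ Set.Ioo (0 : ℝ) 1) ∧
      (∀ k : Fin K,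
        -- received signal powers and relay-noise power at receiver k
        (ρ k * ‖star (h k) ⬝ᵥ W.mulVec (G.mulVec (f k))‖ ^ 2) /
          (ρ k * ((∑ j ∈ Finset.univ.erase k,
                    ‖star (h k) ⬝ᵥ W.mulVec (G.mulVec (f j))‖ ^ 2)
                  + σr ^ 2 * (∑ j, ‖Matrix.vecMul (star (h k)) W j‖ ^ 2)
                  + (σ k) ^ 2)
            + (ω k) ^ 2) ≥ γ k ∧
        ξ k * (1 - ρ k) * ((∑ j, ‖star (h k) ⬝ᵥ W.mulVec (G.mulVec (f j))‖ ^ 2)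
                  + σr ^ 2 * (∑ j, ‖Matrix.vecMul (star (h k)) W j‖ ^ 2)
                  + (σ k) ^ 2) ≥ ψ k) := by
  have hKne : Nonempty (Fin K) := ⟨⟨0, hK⟩⟩
  set A := ((Matrix.of fun (k : Fin K) (i : Fin Nr) => star (h k i)) * G) with hA
  have hsurj : Function.Surjective A.mulVecLin := by
    rw [← LinearMap.range_eq_top]
    apply Submodule.eq_top_of_finrank_eq
    rw [Module.finrank_pi]
    show A.rank = _
    simp [hrank]
  choose x hx using fun k => hsurj (Pi.single k (1:ℂ))
  have hM0' : ∀ k : Fin K, (0:ℝ) < 2 * ψ k / ξ k := fun k => by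
    have := (hξ k).1; have := hψ k; positivity
  set M : ℝ := 1 + Finset.univ.sup' Finset.univ_nonempty
      (fun k => max (γ k * ((σr^2 * (∑ j, ‖star (h k) j‖^2) + (σ k)^2) + 2*(ω k)^2))
        (2 * ψ k / ξ k)) with hM
  have hMbig : ∀ k : Fin K,
      max (γ k * ((σr^2 * (∑ j, ‖star (h k) j‖^2) + (σ k)^2) + 2*(ω k)^2)) (2 * ψ k / ξ k) ≤ M := by
    intro k
    have := Finset.le_sup'
      (f := fun k => max (γ k * ((σr^2 * (∑ j, ‖star (h k) j‖^2) + (σ k)^2) + 2*(ω k)^2))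
        (2 * ψ k / ξ k)) (Finset.mem_univ k)
    linarith
  have hM0 : 0 < M := by
    have k0 : Fin K := ⟨0, hK⟩
    exact lt_of_lt_of_le (hM0' k0) (le_trans (le_max_right _ _) (hMbig k0))
  set t : ℝ := Real.sqrt M with ht
  have ht2 : t^2 = M := Real.sq_sqrt hM0.le
  have ht0 : 0 ≤ t := Real.sqrt_nonneg M
  refine ⟨fun k i => (t:ℂ) * x k i, 1, fun _ => 1/2, fun k => ⟨by norm_num, by norm_num⟩, ?_⟩
  intro k
  have key : ∀ j, star (h k) ⬝ᵥ (1 : Matrix (Fin Nr) (Fin Nr) ℂ).mulVec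
      (G.mulVec (fun i => (t:ℂ) * x j i)) = (t:ℂ) * (if k = j then 1 else 0) := by
    intro j
    have hfs : (fun i => (t:ℂ) * x j i) = (t:ℂ) • x j := by
      funext i; simp [Pi.smul_apply, smul_eq_mul]
    rw [Matrix.one_mulVec, hfs, Matrix.mulVec_smul]
    have hAx : A.mulVec (x j) k = (Pi.single j 1 : Fin K → ℂ) k := by
      rw [← Matrix.mulVecLin_apply, hx]
    have hAmv : A.mulVec (x j) = (Matrix.of fun (k : Fin K) (i : Fin Nr) => star (h k i)).mulVec
        (G.mulVec (x j)) := by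
      rw [hA, ← Matrix.mulVec_mulVec]
    have hdot : star (h k) ⬝ᵥ G.mulVec (x j) = A.mulVec (x j) k := by
      rw [hAmv]; rfl
    rw [dotProduct_smul, smul_eq_mul, hdot, hAx, Pi.single_apply]
  have keynorm : ∀ j, ‖star (h k) ⬝ᵥ (1 : Matrix (Fin Nr) (Fin Nr) ℂ).mulVec
      (G.mulVec (fun i => (t:ℂ) * x j i))‖^2 = if k = j then t^2 else 0 := by
    intro j
    rw [key j]
    by_cases hkj : k = j <;> simp [hkj, Complex.norm_real, abs_of_nonneg ht0]
  have hsum_erase : (∑ j ∈ Finset.univ.erase k,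
      ‖star (h k) ⬝ᵥ (1 : Matrix (Fin Nr) (Fin Nr) ℂ).mulVec
        (G.mulVec (fun i => (t:ℂ) * x j i))‖^2) = 0 := by
    apply Finset.sum_eq_zero
    intro j hj
    rw [keynorm j, if_neg]
    exact fun hkj => (Finset.mem_erase.mp hj).1 hkj.symm
  have hsum_all : (∑ j, ‖star (h k) ⬝ᵥ (1 : Matrix (Fin Nr) (Fin Nr) ℂ).mulVec
        (G.mulVec (fun i => (t:ℂ) * x j i))‖^2) = t^2 := by
    simp only [keynorm]
    simp
  have hvm : (∑ j, ‖Matrix.vecMul (star (h k)) (1 : Matrix (Fin Nr) (Fin Nr) ℂ) j‖^2)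
      = ∑ j, ‖star (h k) j‖^2 := by
    rw [Matrix.vecMul_one]
  have hS0 : (0:ℝ) ≤ ∑ j, ‖star (h k) j‖^2 :=
    Finset.sum_nonneg fun j _ => by positivity
  have hMk1 : γ k * ((σr^2 * (∑ j, ‖star (h k) j‖^2) + (σ k)^2) + 2*(ω k)^2) ≤ t^2 := by
    rw [ht2]; exact le_trans (le_max_left _ _) (hMbig k)
  have hMk2 : 2 * ψ k / ξ k ≤ t^2 := by
    rw [ht2]; exact le_trans (le_max_right _ _) (hMbig k)
  constructor
  · rw [keynorm k, if_pos rfl, hsum_erase, hvm, ge_iff_le]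
    have hD : (0:ℝ) < 1/2 * ((0:ℝ) + σr^2 * (∑ j, ‖star (h k) j‖^2) + (σ k)^2) + (ω k)^2 := by
      have := hω k; have := hσ k
      nlinarith [mul_nonneg (sq_nonneg σr) hS0]
    rw [le_div_iff₀ hD]
    nlinarith [hMk1, hγ k, hω k]
  · rw [hsum_all, hvm]
    have hξk := (hξ k).1
    have h2ψ : 2 * ψ k ≤ t^2 * ξ k := (div_le_iff₀ hξk).mp hMk2
    nlinarith [h2ψ, hS0, hσ k, hξk, mul_nonneg hξk.le (mul_nonneg (sq_nonneg σr) hS0),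
      mul_nonneg hξk.le (sq_nonneg (σ k))]
end

section
/- Let U ∈ ℂ^{n×n} be Hermitian, ĥ ∈ ℂⁿ, s ∈ ℝ, and η > 0. Then (ĥ+e)ᴴU(ĥ+e) ≥ s for every e ∈ ℂⁿ with ‖e‖ ≤ η if and only if there exists λ ≥ 0 such that the (n+1)×(n+1) Hermitian block matrix [[U + λI_n, Uĥ], [ĥᴴU, ĥᴴUĥ − s − λη²]] is positive semidefinite. -/
/-!
Minimise `φ e = re ⟪ĥ + e, U (ĥ + e)⟫` over the ball `‖e‖ ≤ η` (compact) at some `a`. First-order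
optimality says that `a` also minimises the linear form `re ⟪U (ĥ + a), ·⟫` on the ball, and this
forces `U (ĥ + a) + μ a = 0` for `μ = ‖U (ĥ + a)‖ / η ≥ 0`, with `μ (η² - ‖a‖²) = 0`. Then the
Lagrangian `φ e + μ ‖e‖²` exceeds its value at `a` by exactly the quadratic form of `U + μ I` at
`e - a`. On the sphere (or, when `a` is interior and so `μ = 0`, on the whole ball) this excess
is `φ e - φ a ≥ 0`, and since every direction is (a limit of) a direction from `a` to such a
point, `U + μ I ⪰ 0`. Together with `φ a ≥ s` this gives `φ e - s + μ (‖e‖² - η²) ≥ 0` for all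
`e`, and homogenising this inequality in the extra coordinate (`(x, t) = t • (x / t, 1)`) gives the
positive semidefinite block matrix.
-/

open Matrix ComplexOrder Metric RCLike Filter Topology WithLp

lemma nonneg_of_forall_mul_add_mul_sq_nonneg {b c : ℝ}
    (h : ∀ t : ℝ, 0 < t → t ≤ 1 → 0 ≤ b * t + c * t ^ 2) : 0 ≤ b := by
  have hlim : Tendsto (fun t : ℝ => b + c * t) (𝓝[>] 0) (𝓝 b) := by
    have : Continuous fun t : ℝ => b + c * t := by fun_prop
    simpa using (this.tendsto 0).mono_left nhdsWithin_le_nhds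
  refine ge_of_tendsto hlim ?_
  filter_upwards [Ioo_mem_nhdsGT one_pos] with t ⟨ht0, ht1⟩
  nlinarith [h t ht0 ht1.le]

section QuadraticOnBall

variable {𝕜 E : Type*} [RCLike 𝕜] [NormedAddCommGroup E] [InnerProductSpace 𝕜 E]

local notation "⟪" x ", " y "⟫" => inner 𝕜 x y

lemma re_inner_map_ofReal_smul (T : E →ₗ[𝕜] E) (t : ℝ) (v : E) :
    re ⟪(t : 𝕜) • v, T ((t : 𝕜) • v)⟫ = t ^ 2 * re ⟪v, T v⟫ := by
  simp [inner_smul_left, inner_smul_right, ← mul_assoc, sq]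

lemma LinearMap.IsSymmetric.re_inner_map_add {T : E →ₗ[𝕜] E} (hT : T.IsSymmetric) (x y : E) :
    re ⟪x + y, T (x + y)⟫ = re ⟪x, T x⟫ + 2 * re ⟪T x, y⟫ + re ⟪y, T y⟫ := by
  have hxy : re ⟪x, T y⟫ = re ⟪T x, y⟫ := by rw [hT]
  have hyx : re ⟪y, T x⟫ = re ⟪T x, y⟫ := inner_re_symm _ _
  rw [map_add, inner_add_left, inner_add_right, inner_add_right]
  simp only [map_add, hxy, hyx]
  ring

lemma add_ofReal_smul_sub_mem_closedBall {a y : E} {η t : ℝ} (ha : a ∈ closedBall (0 : E) η)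
    (hy : y ∈ closedBall (0 : E) η) (ht0 : 0 ≤ t) (ht1 : t ≤ 1) :
    a + (t : 𝕜) • (y - a) ∈ closedBall (0 : E) η := by
  rw [mem_closedBall_zero_iff] at *
  have hconv : a + (t : 𝕜) • (y - a) = ((1 - t : ℝ) : 𝕜) • a + (t : 𝕜) • y := by
    push_cast; module
  calc ‖a + (t : 𝕜) • (y - a)‖ ≤ (1 - t) * ‖a‖ + t * ‖y‖ := by
        rw [hconv]
        refine (norm_add_le _ _).trans_eq ?_
        rw [norm_smul, norm_smul, norm_ofReal, norm_ofReal, abs_of_nonneg ht0,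
          abs_of_nonneg (sub_nonneg.2 ht1)]
    _ ≤ (1 - t) * η + t * η := by gcongr
    _ = η := by ring

lemma add_smul_eq_zero_of_isMinOn_re_inner {η : ℝ} (hη : 0 < η) {a r : E} (ha : ‖a‖ ≤ η)
    (hmin : IsMinOn (fun y => re ⟪r, y⟫) (closedBall 0 η) a) :
    r + ((‖r‖ / η : ℝ) : 𝕜) • a = 0 ∧ ‖r‖ / η * (η ^ 2 - ‖a‖ ^ 2) = 0 := by
  rcases eq_or_ne r 0 with rfl | hr
  · simp
  have hr0 : 0 < ‖r‖ := norm_pos_iff.2 hr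
  set μ := ‖r‖ / η with hμ
  have hμ0 : 0 < μ := by positivity
  have hμη : ‖r‖ = μ * η := by rw [hμ, div_mul_cancel₀ _ hη.ne']
  -- Comparing `a` with `-(η / ‖r‖) • r` gives `re ⟪r, a⟫ ≤ -η ‖r‖`, and then
  -- `‖r + μ a‖² ≤ μ² (‖a‖² - η²) ≤ 0`.
  have hy : -((η / ‖r‖ : ℝ) : 𝕜) • r ∈ closedBall (0 : E) η := by
    rw [mem_closedBall_zero_iff, norm_smul, norm_neg, norm_ofReal, abs_of_pos (by positivity),
      div_mul_cancel₀ _ hr0.ne']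
  have hlin : re ⟪r, a⟫ ≤ -(η * ‖r‖) := by
    have : re ⟪r, a⟫ ≤ re ⟪r, -((η / ‖r‖ : ℝ) : 𝕜) • r⟫ := hmin hy
    rw [neg_smul, inner_neg_right, inner_smul_right, map_neg, re_ofReal_mul,
      inner_self_eq_norm_sq] at this
    convert this using 1
    field_simp
  have hsq : ‖r + (μ : 𝕜) • a‖ ^ 2 + μ ^ 2 * (η ^ 2 - ‖a‖ ^ 2) ≤ 0 := by
    rw [norm_add_sq (𝕜 := 𝕜), inner_smul_right, re_ofReal_mul, norm_smul, norm_ofReal,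
      abs_of_pos hμ0]
    nlinarith
  have hslack : 0 ≤ μ ^ 2 * (η ^ 2 - ‖a‖ ^ 2) := by
    have : ‖a‖ ^ 2 ≤ η ^ 2 := by gcongr
    nlinarith
  refine ⟨norm_eq_zero.1 (pow_eq_zero_iff two_ne_zero |>.1 ?_), ?_⟩
  · nlinarith [sq_nonneg ‖r + (μ : 𝕜) • a‖]
  · have : μ * (μ * (η ^ 2 - ‖a‖ ^ 2)) = 0 := by nlinarith [sq_nonneg ‖r + (μ : 𝕜) • a‖]
    exact (mul_eq_zero.1 this).resolve_left hμ0.ne'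

lemma nonneg_of_forall_norm_le_nonneg_sub {P : E → ℝ}
    (hP : ∀ (t : ℝ) v, P ((t : 𝕜) • v) = t ^ 2 * P v) {η : ℝ} {a : E} (ha : ‖a‖ < η)
    (h : ∀ x, ‖x‖ ≤ η → 0 ≤ P (x - a)) (v : E) : 0 ≤ P v := by
  set t := (η - ‖a‖) / (‖v‖ + 1) with ht
  have ht0 : 0 < t := div_pos (sub_pos.2 ha) (by positivity)
  have hx : ‖a + (t : 𝕜) • v‖ ≤ η :=
    calc ‖a + (t : 𝕜) • v‖ ≤ ‖a‖ + t * ‖v‖ := by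
          refine (norm_add_le _ _).trans_eq ?_
          rw [norm_smul, norm_ofReal, abs_of_pos ht0]
      _ ≤ ‖a‖ + t * (‖v‖ + 1) := by gcongr; linarith
      _ = η := by rw [ht, div_mul_cancel₀ _ (by positivity)]; ring
  have := h _ hx
  rw [add_sub_cancel_left, hP] at this
  exact (mul_nonneg_iff_of_pos_left (by positivity)).1 this

lemma nonneg_of_forall_norm_eq_nonneg_sub {P : E → ℝ} (hPc : Continuous P)
    (hP : ∀ (t : ℝ) v, P ((t : 𝕜) • v) = t ^ 2 * P v) {η : ℝ} (hη : 0 < η) {a : E}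
    (ha : ‖a‖ = η) (h : ∀ x, ‖x‖ = η → 0 ≤ P (x - a)) (v : E) : 0 ≤ P v := by
  -- A line through `a` transversal to the sphere meets it a second time; tangent directions are
  -- limits of transversal ones.
  have htransversal : ∀ w, re ⟪a, w⟫ ≠ 0 → 0 ≤ P w := by
    intro w hw
    have hw0 : w ≠ 0 := by rintro rfl; simp at hw
    set t := -2 * re ⟪a, w⟫ / ‖w‖ ^ 2 with ht
    have ht0 : t ≠ 0 := div_ne_zero (by simpa using hw) (by positivity)
    have hx : ‖a + (t : 𝕜) • w‖ = η := by
      have : ‖a + (t : 𝕜) • w‖ ^ 2 = η ^ 2 := by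
        rw [norm_add_sq (𝕜 := 𝕜), inner_smul_right, re_ofReal_mul, norm_smul, norm_ofReal,
          mul_pow, sq_abs, ha, ht]
        field_simp
        ring
      exact (sq_eq_sq₀ (norm_nonneg _) hη.le).1 this
    have := h _ hx
    rw [add_sub_cancel_left, hP] at this
    exact (mul_nonneg_iff_of_pos_left (by positivity)).1 this
  by_cases hv : re ⟪a, v⟫ = 0
  · have hlim : Tendsto (fun ε : ℝ => P (v + (ε : 𝕜) • a)) (𝓝[>] 0) (𝓝 (P v)) := by
      have : Continuous fun ε : ℝ => P (v + (ε : 𝕜) • a) := hPc.comp (by fun_prop)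
      simpa using (this.tendsto 0).mono_left nhdsWithin_le_nhds
    refine ge_of_tendsto hlim ?_
    filter_upwards [self_mem_nhdsWithin] with ε (hε : 0 < ε)
    refine htransversal _ ?_
    rw [inner_add_right, inner_smul_right, map_add, re_ofReal_mul, hv, inner_self_eq_norm_sq, ha]
    positivity
  · exact htransversal v hv

variable {T : E →ₗ[𝕜] E}

lemma isMinOn_re_inner_of_isMinOn (hT : T.IsSymmetric) {h a : E} {η : ℝ}
    (ha : a ∈ closedBall (0 : E) η)
    (hmin : IsMinOn (fun x => re ⟪h + x, T (h + x)⟫) (closedBall 0 η) a) :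
    IsMinOn (fun y => re ⟪T (h + a), y⟫) (closedBall 0 η) a := by
  intro y hy
  have hslope : 0 ≤ 2 * re ⟪T (h + a), y - a⟫ := by
    refine nonneg_of_forall_mul_add_mul_sq_nonneg (c := re ⟪y - a, T (y - a)⟫) fun t ht0 ht1 => ?_
    have hle := hmin (add_ofReal_smul_sub_mem_closedBall (𝕜 := 𝕜) ha hy ht0.le ht1)
    simp only [Set.mem_ofPred_eq, ← add_assoc] at hle
    rw [hT.re_inner_map_add (h + a), re_inner_map_ofReal_smul, inner_smul_right (𝕜 := 𝕜),
      re_ofReal_mul] at hle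
    linarith
  simp only [Set.mem_ofPred_eq]
  rw [inner_sub_right, map_sub] at hslope
  linarith

lemma re_inner_add_mul_norm_sq_eq_of_add_smul_eq_zero (hT : T.IsSymmetric) {h a : E} {μ : ℝ}
    (hcrit : T (h + a) + (μ : 𝕜) • a = 0) (x : E) :
    re ⟪h + x, T (h + x)⟫ + μ * ‖x‖ ^ 2 =
      re ⟪h + a, T (h + a)⟫ + μ * ‖a‖ ^ 2 + (re ⟪x - a, T (x - a)⟫ + μ * ‖x - a‖ ^ 2) := by
  obtain ⟨v, rfl⟩ : ∃ v, x = a + v := ⟨x - a, by abel⟩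
  have hcross : re ⟪T (h + a), v⟫ + μ * re ⟪a, v⟫ = 0 := by
    simpa [inner_add_left, inner_smul_left] using congrArg (fun w => re ⟪w, v⟫) hcrit
  rw [add_sub_cancel_left, ← add_assoc h a v, hT.re_inner_map_add, norm_add_sq (𝕜 := 𝕜)]
  linear_combination 2 * hcross

lemma re_inner_add_mul_norm_sq_nonneg_of_isMinOn [FiniteDimensional 𝕜 E] (hT : T.IsSymmetric)
    {h a : E} {η μ : ℝ} (hη : 0 < η) (ha : ‖a‖ ≤ η)
    (hmin : ∀ x, ‖x‖ ≤ η → re ⟪h + a, T (h + a)⟫ ≤ re ⟪h + x, T (h + x)⟫)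
    (hcrit : T (h + a) + (μ : 𝕜) • a = 0) (hslack : μ * (η ^ 2 - ‖a‖ ^ 2) = 0) (v : E) :
    0 ≤ re ⟪v, T v⟫ + μ * ‖v‖ ^ 2 := by
  have hTc : Continuous T := T.continuous_of_finiteDimensional
  have hsmul : ∀ (t : ℝ) v, re ⟪(t : 𝕜) • v, T ((t : 𝕜) • v)⟫ + μ * ‖(t : 𝕜) • v‖ ^ 2 =
      t ^ 2 * (re ⟪v, T v⟫ + μ * ‖v‖ ^ 2) := fun t v => by
    rw [re_inner_map_ofReal_smul, norm_smul, norm_ofReal, mul_pow, sq_abs]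
    ring
  have hexcess := re_inner_add_mul_norm_sq_eq_of_add_smul_eq_zero hT hcrit
  rcases ha.lt_or_eq with hlt | heq
  · have hμ : μ = 0 := by
      have : 0 < η ^ 2 - ‖a‖ ^ 2 := by nlinarith [norm_nonneg a]
      exact (mul_eq_zero.1 hslack).resolve_right this.ne'
    refine nonneg_of_forall_norm_le_nonneg_sub (P := fun v => re ⟪v, T v⟫ + μ * ‖v‖ ^ 2)
      hsmul hlt (fun x hx => ?_) v
    have := hexcess x
    simp only [hμ, zero_mul, add_zero] at this ⊢
    linarith [hmin x hx]
  · refine nonneg_of_forall_norm_eq_nonneg_sub (P := fun v => re ⟪v, T v⟫ + μ * ‖v‖ ^ 2)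
      (by fun_prop) hsmul hη heq (fun x hx => ?_) v
    have := hexcess x
    rw [hx, heq] at this
    linarith [hmin x hx.le]

theorem forall_norm_le_le_re_inner_iff [FiniteDimensional 𝕜 E] (hT : T.IsSymmetric) (h : E)
    (s : ℝ) {η : ℝ} (hη : 0 < η) :
    (∀ e, ‖e‖ ≤ η → s ≤ re ⟪h + e, T (h + e)⟫) ↔
      ∃ μ : ℝ, 0 ≤ μ ∧ (∀ v, 0 ≤ re ⟪v, T v⟫ + μ * ‖v‖ ^ 2) ∧
        ∀ f, s + μ * (η ^ 2 - ‖f‖ ^ 2) ≤ re ⟪h + f, T (h + f)⟫ := by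
  refine ⟨fun hyp => ?_, fun ⟨μ, hμ, _, hf⟩ e he => ?_⟩
  · have := FiniteDimensional.proper_rclike 𝕜 E
    have hTc : Continuous T := T.continuous_of_finiteDimensional
    obtain ⟨a, ha, hmin⟩ := (isCompact_closedBall (0 : E) η).exists_isMinOn
      (nonempty_closedBall.2 hη.le)
      (by fun_prop : Continuous fun x => re ⟪h + x, T (h + x)⟫).continuousOn
    have ha' : ‖a‖ ≤ η := mem_closedBall_zero_iff.1 ha
    have hmin' : ∀ x, ‖x‖ ≤ η → re ⟪h + a, T (h + a)⟫ ≤ re ⟪h + x, T (h + x)⟫ :=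
      fun x hx => hmin (mem_closedBall_zero_iff.2 hx)
    obtain ⟨hcrit, hslack⟩ :=
      add_smul_eq_zero_of_isMinOn_re_inner hη ha' (isMinOn_re_inner_of_isMinOn hT ha hmin)
    have hP := re_inner_add_mul_norm_sq_nonneg_of_isMinOn hT hη ha' hmin' hcrit hslack
    refine ⟨_, by positivity, hP, fun f => ?_⟩
    linarith [re_inner_add_mul_norm_sq_eq_of_add_smul_eq_zero hT hcrit f, hP (f - a), hyp a ha']
  · have : ‖e‖ ^ 2 ≤ η ^ 2 := by gcongr
    nlinarith [hf e]

end QuadraticOnBall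

section Homogenization

variable {𝕜 m n : Type*} [RCLike 𝕜] [Fintype m] [Fintype n]

lemma Matrix.IsHermitian.posSemidef_iff_forall_re_nonneg {M : Matrix m m 𝕜} (hM : M.IsHermitian) :
    M.PosSemidef ↔ ∀ z, 0 ≤ re (star z ⬝ᵥ M *ᵥ z) := by
  rw [posSemidef_iff_dotProduct_mulVec, and_iff_right hM]
  refine forall_congr' fun z => ?_
  rw [RCLike.nonneg_iff, and_iff_left (hM.im_star_dotProduct_mulVec_self z)]

lemma re_star_smul_dotProduct_mulVec_smul (M : Matrix m m 𝕜) (c : 𝕜) (z : m → 𝕜) :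
    re (star (c • z) ⬝ᵥ M *ᵥ (c • z)) = ‖c‖ ^ 2 * re (star z ⬝ᵥ M *ᵥ z) := by
  rw [star_smul, mulVec_smul, smul_dotProduct, dotProduct_smul, smul_eq_mul, smul_eq_mul,
    ← mul_assoc, star_def, RCLike.conj_mul, ← ofReal_pow, re_ofReal_mul]

lemma Matrix.IsHermitian.posSemidef_iff_sumElim {M : Matrix (n ⊕ Fin 1) (n ⊕ Fin 1) 𝕜}
    (hM : M.IsHermitian) :
    M.PosSemidef ↔ ∀ x : n → 𝕜,
      0 ≤ re (star (Sum.elim x fun _ => 0) ⬝ᵥ M *ᵥ Sum.elim x fun _ => 0) ∧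
        0 ≤ re (star (Sum.elim x fun _ => 1) ⬝ᵥ M *ᵥ Sum.elim x fun _ => 1) := by
  rw [hM.posSemidef_iff_forall_re_nonneg]
  refine ⟨fun H x => ⟨H _, H _⟩, fun H z => ?_⟩
  obtain ⟨x, t, rfl⟩ : ∃ x t, z = Sum.elim x fun _ => t :=
    ⟨z ∘ Sum.inl, z (Sum.inr 0), by ext (i | i) <;> simp [Fin.fin_one_eq_zero]⟩
  rcases eq_or_ne t 0 with rfl | ht
  · exact (H x).1
  · have hz : (Sum.elim x fun _ : Fin 1 => t) = t • Sum.elim (t⁻¹ • x) fun _ => 1 := by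
      ext (i | i) <;> simp [ht]
    rw [hz, re_star_smul_dotProduct_mulVec_smul]
    exact mul_nonneg (by positivity) (H _).2

end Homogenization

section SProcedureMatrix

variable {𝕜 n : Type*} [RCLike 𝕜] [Fintype n] [DecidableEq n]

def sProcedureMatrix (U : Matrix n n 𝕜) (h : n → 𝕜) (μ : ℝ) (d : 𝕜) :
    Matrix (n ⊕ Fin 1) (n ⊕ Fin 1) 𝕜 :=
  fromBlocks (U + (μ : 𝕜) • 1) (of fun i (_ : Fin 1) => (U *ᵥ h) i)
    (of fun (_ : Fin 1) j => (star h ᵥ* U) j) (of fun (_ : Fin 1) (_ : Fin 1) => d)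

lemma star_sumElim_dotProduct_sProcedureMatrix_mulVec (U : Matrix n n 𝕜) (h : n → 𝕜) (μ : ℝ)
    (d : 𝕜) (x : n → 𝕜) (t : 𝕜) :
    star (Sum.elim x fun _ => t) ⬝ᵥ sProcedureMatrix U h μ d *ᵥ Sum.elim x (fun _ => t) =
      star (x + t • h) ⬝ᵥ U *ᵥ (x + t • h) + μ * (star x ⬝ᵥ x) +
        star t * t * (d - star h ⬝ᵥ U *ᵥ h) := by
  have hB : (of fun i (_ : Fin 1) => (U *ᵥ h) i) *ᵥ (fun _ => t) = t • (U *ᵥ h) := by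
    ext i; simp [mulVec, dotProduct, mul_comm]
  have hCD : (of fun (_ : Fin 1) j => (star h ᵥ* U) j) *ᵥ x +
      (of fun (_ : Fin 1) (_ : Fin 1) => d) *ᵥ (fun _ => t) =
        fun _ => star h ⬝ᵥ U *ᵥ x + d * t := by
    ext
    simp only [Pi.add_apply, mulVec, of_apply]
    rw [← dotProduct_mulVec]
    simp [dotProduct]
  have hFin1 : ∀ c : 𝕜, star (fun _ : Fin 1 => t) ⬝ᵥ (fun _ => c) = star t * c := by
    simp [dotProduct]
  rw [sProcedureMatrix, fromBlocks_mulVec, Function.star_sumElim, sumElim_dotProduct_sumElim,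
    Sum.elim_comp_inl, Sum.elim_comp_inr, hB, hCD, hFin1]
  simp only [star_add, star_smul, add_mulVec, smul_mulVec, one_mulVec, mulVec_add, mulVec_smul,
    dotProduct_add, add_dotProduct, dotProduct_smul, smul_dotProduct, smul_eq_mul]
  ring

lemma isHermitian_sProcedureMatrix {U : Matrix n n 𝕜} (hU : U.IsHermitian) (h : n → 𝕜) (μ : ℝ)
    {d : 𝕜} (hd : star d = d) : (sProcedureMatrix U h μ d).IsHermitian := by
  have hBC : (of fun i (_ : Fin 1) => (U *ᵥ h) i)ᴴ = of fun (_ : Fin 1) j => (star h ᵥ* U) j := by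
    ext _ j
    rw [conjTranspose_apply, of_apply, of_apply, ← Pi.star_apply, star_mulVec, hU.eq]
  refine isHermitian_fromBlocks_iff.2
    ⟨hU.add ?_, hBC, by rw [← hBC, conjTranspose_conjTranspose], ?_⟩
  · simp [IsHermitian, conjTranspose_smul]
  · ext; simp [hd]

lemma posSemidef_sProcedureMatrix_iff {U : Matrix n n 𝕜} (hU : U.IsHermitian) (h : n → 𝕜)
    (μ : ℝ) {d : 𝕜} (hd : star d = d) :
    (sProcedureMatrix U h μ d).PosSemidef ↔
      (∀ x, 0 ≤ re (star x ⬝ᵥ U *ᵥ x) + μ * re (star x ⬝ᵥ x)) ∧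
        ∀ x, re (star h ⬝ᵥ U *ᵥ h - d) ≤
          re (star (h + x) ⬝ᵥ U *ᵥ (h + x)) + μ * re (star x ⬝ᵥ x) := by
  rw [(isHermitian_sProcedureMatrix hU h μ hd).posSemidef_iff_sumElim, ← forall_and]
  refine forall_congr' fun x => and_congr ?_ ?_ <;>
    simp only [star_sumElim_dotProduct_sProcedureMatrix_mulVec]
  · simp
  · simp only [one_smul, star_one, one_mul, add_comm x h, map_add, map_sub, re_ofReal_mul]
    constructor <;> intro <;> linarith

end SProcedureMatrix


lemma Matrix.inner_toLp_toEuclideanLin_toLp {𝕜 n : Type*} [RCLike 𝕜] [Fintype n] [DecidableEq n]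
    (U : Matrix n n 𝕜) (x y : n → 𝕜) :
    inner 𝕜 (toLp 2 x) (toEuclideanLin U (toLp 2 y)) = star x ⬝ᵥ U *ᵥ y :=
  dotProduct_comm _ _

/-- S-procedure equivalence: for Hermitian U, ĥ ∈ ℂⁿ, s ∈ ℝ and η > 0, one has
(ĥ+e)ᴴU(ĥ+e) ≥ s for all ‖e‖ ≤ η iff there exists λ ≥ 0 making the block matrix
[[U + λI, Uĥ], [ĥᴴU, ĥᴴUĥ − s − λη²]] positive semidefinite. -/
theorem s_procedure
    (n : ℕ) (U : Matrix (Fin n) (Fin n) ℂ) (hU : U.IsHermitian)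
    (hhat : Fin n → ℂ) (s η : ℝ) (hη : 0 < η) :
    (∀ e : Fin n → ℂ, Real.sqrt (∑ i, ‖e i‖ ^ 2) ≤ η →
        s ≤ (star (hhat + e) ⬝ᵥ U.mulVec (hhat + e)).re) ↔
    (∃ lam : ℝ, 0 ≤ lam ∧
      (Matrix.fromBlocks
        (U + (lam : ℂ) • (1 : Matrix (Fin n) (Fin n) ℂ))
        (Matrix.of fun (i : Fin n) (_ : Fin 1) => U.mulVec hhat i)
        (Matrix.of fun (_ : Fin 1) (j : Fin n) => Matrix.vecMul (star hhat) U j)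
        (Matrix.of fun (_ : Fin 1) (_ : Fin 1) =>
          (star hhat ⬝ᵥ U.mulVec hhat) - (s : ℂ) - ((lam : ℂ) * (η : ℂ) ^ 2))).PosSemidef) := by
  have hq := U.inner_toLp_toEuclideanLin_toLp
  have hnorm : ∀ x : Fin n → ℂ, ‖toLp 2 x‖ ^ 2 = (star x ⬝ᵥ x).re := fun x => by
    rw [@norm_sq_eq_re_inner ℂ, EuclideanSpace.inner_toLp_toLp, dotProduct_comm]; rfl
  calc _ ↔ ∀ e : EuclideanSpace ℂ (Fin n), ‖e‖ ≤ η →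
        s ≤ re (inner ℂ (toLp 2 hhat + e) (toEuclideanLin U (toLp 2 hhat + e))) :=
        (WithLp.equiv 2 _).symm.forall_congr fun {e} => by
          simp only [WithLp.equiv_symm_apply, ← WithLp.toLp_add, hq, EuclideanSpace.norm_eq,
            RCLike.re_to_complex]
    _ ↔ _ := forall_norm_le_le_re_inner_iff (isSymmetric_toEuclideanLin_iff.2 hU) _ s hη
    _ ↔ _ := exists_congr fun μ => and_congr_right fun _ => by
      have hd : star (star hhat ⬝ᵥ U *ᵥ hhat - s - μ * η ^ 2 : ℂ) =
          star hhat ⬝ᵥ U *ᵥ hhat - s - μ * η ^ 2 := by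
        rw [Complex.star_def, Complex.conj_eq_iff_im]
        simpa [← Complex.ofReal_pow] using hU.im_star_dotProduct_mulVec_self hhat
      change _ ↔ (sProcedureMatrix U hhat μ _).PosSemidef
      rw [posSemidef_sProcedureMatrix_iff hU hhat μ hd,
        ← (WithLp.equiv 2 (Fin n → ℂ)).symm.forall_congr_right,
        ← (WithLp.equiv 2 (Fin n → ℂ)).symm.forall_congr_right]
      simp only [WithLp.equiv_symm_apply, ← WithLp.toLp_add, hq, hnorm, re_to_complex]
      refine and_congr Iff.rfl (forall_congr' fun x => ?_)
      rw [show star hhat ⬝ᵥ U *ᵥ hhat - (star hhat ⬝ᵥ U *ᵥ hhat - s - μ * η ^ 2) =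
          ((s + μ * η ^ 2 : ℝ) : ℂ) by push_cast; ring, Complex.ofReal_re]
      constructor <;> intro <;> linarith
end

section
/- Let ĥ, v ∈ ℂⁿ and η ≥ 0. Then (|ĥᴴv| + η‖v‖)² is the greatest element of the set { |(ĥ+e)ᴴv|² : e ∈ ℂⁿ, ‖e‖ ≤ η }; that is, the worst-case maximization max_{‖e‖≤η} |(ĥ+e)ᴴv|² has optimal value (|ĥᴴv| + η‖v‖)², and this value is attained. -/
/-!
By Cauchy–Schwarz, `|⟪h + e, v⟫| ≤ |⟪h, v⟫| + ‖e‖‖v‖`. Equality holds for the perturbation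
`e = (η / ‖v‖) conj(u) v`, where `u` is a unit scalar pointing in the direction of `⟪h, v⟫`:
then `⟪e, v⟫ = η‖v‖ u` lies on the same ray as `⟪h, v⟫`, so the triangle inequality is tight.
-/

open Matrix

theorem exists_norm_eq_one_sameRay {F : Type*} [NormedAddCommGroup F] [NormedSpace ℝ F]
    [Nontrivial F] (a : F) : ∃ u : F, ‖u‖ = 1 ∧ SameRay ℝ a u := by
  by_cases ha : a = 0
  · obtain ⟨u, hu⟩ := exists_norm_eq F zero_le_one
    exact ⟨u, hu, ha ▸ SameRay.zero_left u⟩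
  · exact ⟨‖a‖⁻¹ • a, norm_smul_inv_norm ha,
      SameRay.sameRay_nonneg_smul_right a (inv_nonneg.2 (norm_nonneg a))⟩

section InnerProductSpace

open scoped InnerProductSpace

variable {𝕜 E : Type*} [RCLike 𝕜] [NormedAddCommGroup E] [InnerProductSpace 𝕜 E]

theorem norm_inner_add_left_le (h e v : E) :
    ‖⟪h + e, v⟫_𝕜‖ ≤ ‖⟪h, v⟫_𝕜‖ + ‖e‖ * ‖v‖ := by
  rw [inner_add_left]
  exact (norm_add_le _ _).trans (by gcongr; exact norm_inner_le_norm e v)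

theorem inner_conj_mul_div_norm_smul_self (u : 𝕜) (η : ℝ) (v : E) :
    ⟪((starRingEnd 𝕜) u * (η / ‖v‖ : ℝ)) • v, v⟫_𝕜 = (η * ‖v‖) • u := by
  rw [inner_smul_left, inner_self_eq_norm_sq_to_K, RCLike.real_smul_eq_coe_mul]
  rcases eq_or_ne ‖v‖ 0 with hv | hv
  · simp [hv]
  · simp only [map_mul, RCLike.conj_conj, RCLike.conj_ofReal, RCLike.algebraMap_eq_ofReal]
    push_cast
    field_simp

theorem exists_norm_le_norm_inner_add_left_eq (h v : E) {η : ℝ} (hη : 0 ≤ η) :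
    ∃ e : E, ‖e‖ ≤ η ∧ ‖⟪h + e, v⟫_𝕜‖ = ‖⟪h, v⟫_𝕜‖ + η * ‖v‖ := by
  obtain ⟨u, hu, hray⟩ := exists_norm_eq_one_sameRay ⟪h, v⟫_𝕜
  have hηv : 0 ≤ η * ‖v‖ := mul_nonneg hη (norm_nonneg v)
  refine ⟨((starRingEnd 𝕜) u * (η / ‖v‖ : ℝ)) • v, ?_, ?_⟩
  · rw [norm_smul, norm_mul, RCLike.norm_conj, hu, one_mul, RCLike.norm_ofReal,
      abs_of_nonneg (div_nonneg hη (norm_nonneg v))]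
    rcases eq_or_ne ‖v‖ 0 with hv | hv <;> simp [hv, hη]
  · rw [inner_add_left, inner_conj_mul_div_norm_smul_self, (hray.nonneg_smul_right hηv).norm_add,
      norm_smul, hu, Real.norm_of_nonneg hηv, mul_one]

theorem isGreatest_sq_norm_inner_add_left (h v : E) {η : ℝ} (hη : 0 ≤ η) :
    IsGreatest {y | ∃ e : E, ‖e‖ ≤ η ∧ y = ‖⟪h + e, v⟫_𝕜‖ ^ 2} ((‖⟪h, v⟫_𝕜‖ + η * ‖v‖) ^ 2) := by
  obtain ⟨e, he, heq⟩ := exists_norm_le_norm_inner_add_left_eq (𝕜 := 𝕜) h v hη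
  refine ⟨⟨e, he, by rw [heq]⟩, ?_⟩
  rintro _ ⟨e, he, rfl⟩
  gcongr
  exact (norm_inner_add_left_le h e v).trans (by gcongr)

end InnerProductSpace

theorem star_dotProduct_eq_inner_toLp {𝕜 ι : Type*} [RCLike 𝕜] [Fintype ι] (x y : ι → 𝕜) :
    star x ⬝ᵥ y = inner 𝕜 (WithLp.toLp 2 x) (WithLp.toLp 2 y) :=
  dotProduct_comm _ _

theorem sqrt_sum_norm_sq_eq_norm_toLp {𝕜 ι : Type*} [RCLike 𝕜] [Fintype ι] (x : ι → 𝕜) :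
    √(∑ i, ‖x i‖ ^ 2) = ‖WithLp.toLp 2 x‖ :=
  (EuclideanSpace.norm_eq _).symm

/-- Worst-case maximization: (|ĥᴴv| + η‖v‖)² is the greatest element of
{ |(ĥ+e)ᴴv|² : ‖e‖ ≤ η }. -/
theorem worst_case_max
    (n : ℕ) (hhat v : Fin n → ℂ) (η : ℝ) (hη : 0 ≤ η) :
    IsGreatest
      { y : ℝ | ∃ e : Fin n → ℂ, Real.sqrt (∑ i, ‖e i‖ ^ 2) ≤ η ∧
          y = ‖star (hhat + e) ⬝ᵥ v‖ ^ 2 }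
      ((‖star hhat ⬝ᵥ v‖ + η * Real.sqrt (∑ i, ‖v i‖ ^ 2)) ^ 2) := by
  have hEuclid :=
    isGreatest_sq_norm_inner_add_left (𝕜 := ℂ) (WithLp.toLp 2 hhat) (WithLp.toLp 2 v) hη
  simp only [(WithLp.toLp_surjective 2).exists] at hEuclid
  simpa only [star_dotProduct_eq_inner_toLp, sqrt_sum_norm_sq_eq_norm_toLp, WithLp.toLp_add]
    using hEuclid
end

section
/- Let ĥ, v ∈ ℂⁿ and η ≥ 0. Then (max{0, |ĥᴴv| − η‖v‖})² is the least element of the set { |(ĥ+e)ᴴv|² : e ∈ ℂⁿ, ‖e‖ ≤ η }; that is, the worst-case minimization min_{‖e‖≤η} |(ĥ+e)ᴴv|² has optimal value (max{0, |ĥᴴv| − η‖v‖})², and this value is attained. -/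
/-!
By Cauchy–Schwarz, `e ↦ ⟪e, v⟫` maps the ball of radius `η` onto the disc of radius `η ‖v‖`
(onto, by taking multiples of `v`). Since `⟪ĥ + e, v⟫ = ⟪ĥ, v⟫ + ⟪e, v⟫`, the problem is to
minimise `|a + z|` over `|z| ≤ η ‖v‖`, i.e. the distance from `a = ⟪ĥ, v⟫` to that disc, which is
`max 0 (|a| - η ‖v‖)`; squaring is monotone on the nonnegative reals.
-/

open Metric

lemma isLeast_norm_add_closedBall {F : Type*} [SeminormedAddCommGroup F] [NormedSpace ℝ F]
    (a : F) {r : ℝ} (hr : 0 ≤ r) :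
    IsLeast ((fun z : F ↦ ‖a + z‖) '' closedBall 0 r) (max 0 (‖a‖ - r)) := by
  refine ⟨?_, ?_⟩
  · rcases eq_or_ne ‖a‖ 0 with ha | ha
    · exact ⟨0, by simpa using hr, by simp [ha, hr]⟩
    have ha' : 0 < ‖a‖ := (norm_nonneg a).lt_of_ne' ha
    set t := min 1 (r / ‖a‖)
    have ht : t * ‖a‖ = min ‖a‖ r := by
      rw [min_mul_of_nonneg _ _ ha'.le, one_mul, div_mul_cancel₀ _ ha]
    have ht1 : t ≤ 1 := min_le_left _ _
    have ht0 : 0 ≤ t := le_min zero_le_one (div_nonneg hr ha'.le)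
    refine ⟨-t • a, ?_, ?_⟩
    · rw [mem_closedBall_zero_iff, norm_smul, norm_neg, Real.norm_of_nonneg ht0, ht]
      exact min_le_right _ _
    · have hsmul : a + -t • a = (1 - t) • a := by
        rw [sub_smul, one_smul, neg_smul, sub_eq_add_neg]
      simp only
      rw [hsmul, norm_smul, Real.norm_of_nonneg (sub_nonneg.mpr ht1), sub_mul, one_mul, ht]
      rcases le_total ‖a‖ r with h | h <;> simp [h]
  · rintro _ ⟨z, hz, rfl⟩
    rw [mem_closedBall_zero_iff] at hz
    have := norm_sub_norm_le a (-z)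
    rw [norm_neg, sub_neg_eq_add] at this
    exact max_le (norm_nonneg _) (by linarith)

section InnerProductSpace

variable {𝕜 E : Type*} [RCLike 𝕜] [NormedAddCommGroup E] [InnerProductSpace 𝕜 E]

lemma image_inner_left_closedBall (v : E) {η : ℝ} (hη : 0 ≤ η) :
    (fun e : E ↦ inner 𝕜 e v) '' closedBall 0 η = closedBall 0 (η * ‖v‖) := by
  ext z
  simp only [Set.mem_image, mem_closedBall_zero_iff]
  constructor
  · rintro ⟨e, he, rfl⟩
    exact (norm_inner_le_norm e v).trans (mul_le_mul_of_nonneg_right he (norm_nonneg v))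
  · intro hz
    rcases eq_or_ne v 0 with rfl | hv
    · refine ⟨0, by simpa using hη, ?_⟩
      simpa [eq_comm] using hz
    have hv' : 0 < ‖v‖ := norm_pos_iff.mpr hv
    refine ⟨(starRingEnd 𝕜 z / (‖v‖ : 𝕜) ^ 2) • v, ?_, ?_⟩
    · rw [norm_smul, norm_div, RCLike.norm_conj, norm_pow, RCLike.norm_ofReal, abs_norm,
        div_mul_eq_mul_div, pow_two, mul_div_mul_right _ _ hv'.ne', div_le_iff₀ hv']
      exact hz
    · have : (‖v‖ : 𝕜) ≠ 0 := by exact_mod_cast hv'.ne'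
      simp only [inner_smul_left, inner_self_eq_norm_sq_to_K, map_div₀, RCLike.conj_conj,
        map_pow, RCLike.conj_ofReal]
      field_simp

lemma isLeast_norm_inner_add_closedBall (h v : E) {η : ℝ} (hη : 0 ≤ η) :
    IsLeast ((fun e : E ↦ ‖inner 𝕜 (h + e) v‖) '' closedBall 0 η)
      (max 0 (‖inner 𝕜 h v‖ - η * ‖v‖)) := by
  have := isLeast_norm_add_closedBall (inner 𝕜 h v) (mul_nonneg hη (norm_nonneg v))
  rw [← image_inner_left_closedBall v hη, Set.image_image] at this
  simpa only [inner_add_left] using this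

end InnerProductSpace

lemma EuclideanSpace.star_dotProduct_eq_inner {ι 𝕜 : Type*} [Fintype ι] [RCLike 𝕜]
    (x y : ι → 𝕜) : star x ⬝ᵥ y = inner 𝕜 (WithLp.toLp 2 x) (WithLp.toLp 2 y) :=
  dotProduct_comm _ _

lemma EuclideanSpace.norm_toLp {ι 𝕜 : Type*} [Fintype ι] [RCLike 𝕜] (x : ι → 𝕜) :
    ‖WithLp.toLp 2 x‖ = Real.sqrt (∑ i, ‖x i‖ ^ 2) :=
  EuclideanSpace.norm_eq _

/-- Worst-case minimization: (max{0, |ĥᴴv| − η‖v‖})² is the least element of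
{ |(ĥ+e)ᴴv|² : ‖e‖ ≤ η }. -/
theorem worst_case_min
    (n : ℕ) (hhat v : Fin n → ℂ) (η : ℝ) (hη : 0 ≤ η) :
    IsLeast
      { y : ℝ | ∃ e : Fin n → ℂ, Real.sqrt (∑ i, ‖e i‖ ^ 2) ≤ η ∧
          y = ‖star (hhat + e) ⬝ᵥ v‖ ^ 2 }
      ((max 0 (‖star hhat ⬝ᵥ v‖ - η * Real.sqrt (∑ i, ‖v i‖ ^ 2))) ^ 2) := by
  have hleast := isLeast_norm_inner_add_closedBall (𝕜 := ℂ)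
    (WithLp.toLp 2 hhat) (WithLp.toLp 2 v) hη
  have hsq := (pow_left_monotoneOn (n := 2)).mono
    (by rintro _ ⟨e, -, rfl⟩; exact norm_nonneg _) |>.map_isLeast hleast
  rw [Set.image_image] at hsq
  rw [← EuclideanSpace.norm_toLp, EuclideanSpace.star_dotProduct_eq_inner]
  convert hsq using 1
  case e'_2 => rfl
  ext y
  simp only [Set.mem_ofPred_eq, Set.mem_image, mem_closedBall_zero_iff]
  constructor
  · rintro ⟨e, he, rfl⟩
    exact ⟨WithLp.toLp 2 e, by rwa [EuclideanSpace.norm_toLp],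
      by rw [EuclideanSpace.star_dotProduct_eq_inner]; rfl⟩
  · rintro ⟨e, he, rfl⟩
    exact ⟨WithLp.ofLp e, by rwa [← EuclideanSpace.norm_toLp],
      by rw [EuclideanSpace.star_dotProduct_eq_inner]; rfl⟩
end

section
/- Every feasible point of the convexified (CCCP) problem is feasible for the original DC problem: if a point r satisfies w_k(r) − x̂_k(r⁰, r) ≤ 0 and y_k(r) − ẑ_k(r⁰, r) ≤ 0 for every k = 1,…,K, then r also satisfies w_k(r) − x_k(r) ≤ 0 and y_k(r) − z_k(r) ≤ 0 for every k. -/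
open Matrix Finset

lemma rank_one_quad {n m : ℕ} (a : Fin n → ℂ) (B : Matrix (Fin n) (Fin m) ℂ)
    (g h : Fin m → ℂ) :
    star g ⬝ᵥ (Bᴴ * Matrix.of (fun i j => a i * star (a j)) * B).mulVec h
      = star (star a ⬝ᵥ B.mulVec g) * (star a ⬝ᵥ B.mulVec h) := by
  rw [← Matrix.mulVec_mulVec, ← Matrix.mulVec_mulVec, Matrix.dotProduct_mulVec,
    ← Matrix.star_mulVec]
  have h2 : (Matrix.of (fun i j => a i * star (a j))).mulVec (B.mulVec h)
      = fun i => a i * (star a ⬝ᵥ B.mulVec h) := by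
    funext i
    simp [Matrix.mulVec, dotProduct, Finset.mul_sum, mul_assoc]
  rw [h2]
  simp only [dotProduct, Pi.star_apply, star_sum, star_mul', star_star,
    Finset.sum_mul]
  congr 1; funext i; ring

/-- Every point feasible for the convexified (CCCP) constraints is feasible for the
original DC constraints: if w_k(r) − x̂_k(r⁰,r) ≤ 0 and y_k(r) − ẑ_k(r⁰,r) ≤ 0 for
all k, then w_k(r) − x_k(r) ≤ 0 and y_k(r) − z_k(r) ≤ 0 for all k. -/
theorem cccp_feasible_implies_dc_feasible
    (K Nt Nr : ℕ) (hK : 1 ≤ K) (hNt : 1 ≤ Nt) (hNr : 1 ≤ Nr)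
    (G : Matrix (Fin Nr) (Fin Nt) ℂ)
    (T : Matrix (Fin Nr) (Fin Nr) ℂ) (hT : T ∈ Matrix.unitaryGroup (Fin Nr) ℂ)
    (hhat : Fin K → Fin Nr → ℂ)
    (γ ψ ξ σ ω : Fin K → ℝ) (σr : ℝ)
    (hγ : ∀ k, 0 < γ k) (hψ : ∀ k, 0 < ψ k) (hξ : ∀ k, 0 < ξ k)
    (hσr : 0 < σr) (hσ : ∀ k, 0 < σ k) (hω : ∀ k, 0 < ω k)
    (p q : Fin K → ℝ) (φ : ℝ) (f : Fin K → Fin Nt → ℂ)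
    (p0 q0 : Fin K → ℝ) (φ0 : ℝ) (f0 : Fin K → Fin Nt → ℂ) :
    let M : Fin K → Matrix (Fin Nt) (Fin Nt) ℂ := fun k =>
      Gᴴ * Tᴴ * Matrix.of (fun i j => hhat k i * star (hhat k j)) * T * G
    let Q : Fin K → (Fin Nt → ℂ) → ℝ := fun k g => (star g ⬝ᵥ (M k).mulVec g).re
    let w : Fin K → ℝ := fun k =>
      (∑ j ∈ Finset.univ.erase k, Q k (f j)) + (σ k) ^ 2 * φ
        + σr ^ 2 * (∑ i, ‖hhat k i‖ ^ 2) + (1 / 4) * (ω k) ^ 2 * (p k + φ) ^ 2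
    let x : Fin K → ℝ := fun k =>
      (1 / 4) * (ω k) ^ 2 * (p k - φ) ^ 2 + (1 / γ k) * Q k (f k)
    let y : Fin K → ℝ := fun k =>
      (ψ k / (4 * ξ k)) * (q k + φ) ^ 2 - σr ^ 2 * (∑ i, ‖hhat k i‖ ^ 2)
    let z : Fin K → ℝ := fun k =>
      (∑ j, Q k (f j)) + (σ k) ^ 2 * φ + (ψ k / (4 * ξ k)) * (q k - φ) ^ 2
    let xhat : Fin K → ℝ := fun k =>
      -(1 / 4) * (ω k) ^ 2 * (p0 k - φ0) ^ 2
        + (1 / 2) * (ω k) ^ 2 * (p0 k - φ0) * (p k - φ)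
        + (1 / γ k) * (2 * (star (f0 k) ⬝ᵥ (M k).mulVec (f k)).re - Q k (f0 k))
    let zhat : Fin K → ℝ := fun k =>
      -(ψ k / (4 * ξ k)) * (q0 k - φ0) ^ 2
        + (ψ k / (2 * ξ k)) * (q0 k - φ0) * (q k - φ)
        + (σ k) ^ 2 * φ
        + (∑ j, (2 * (star (f0 j) ⬝ᵥ (M k).mulVec (f j)).re - Q k (f0 j)))
    (∀ k, w k - xhat k ≤ 0 ∧ y k - zhat k ≤ 0) →
      (∀ k, w k - x k ≤ 0 ∧ y k - z k ≤ 0) := by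
  intro M Q w x y z xhat zhat hfeas k
  have hMk : M k = (T * G)ᴴ * Matrix.of (fun i j => hhat k i * star (hhat k j)) * (T * G) := by
    simp only [M, Matrix.conjTranspose_mul, Matrix.mul_assoc]
  have hcross : ∀ (g h' : Fin Nt → ℂ),
      2 * (star g ⬝ᵥ (M k).mulVec h').re - Q k g ≤ Q k h' := by
    intro g h'
    simp only [Q, hMk, rank_one_quad]
    set c0 := star (hhat k) ⬝ᵥ (T * G).mulVec g with hc0
    set c := star (hhat k) ⬝ᵥ (T * G).mulVec h' with hc
    simp only [Complex.mul_re, Complex.star_def, Complex.conj_re, Complex.conj_im]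
    nlinarith [sq_nonneg (c0.re - c.re), sq_nonneg (c0.im - c.im)]
  have hx : xhat k ≤ x k := by
    have h1 : (1 / γ k) * (2 * (star (f0 k) ⬝ᵥ (M k).mulVec (f k)).re - Q k (f0 k))
        ≤ (1 / γ k) * Q k (f k) :=
      mul_le_mul_of_nonneg_left (hcross (f0 k) (f k)) (by have := hγ k; positivity)
    have h2 : -(1 / 4) * (ω k) ^ 2 * (p0 k - φ0) ^ 2
        + (1 / 2) * (ω k) ^ 2 * (p0 k - φ0) * (p k - φ)
        ≤ (1 / 4) * (ω k) ^ 2 * (p k - φ) ^ 2 := by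
      nlinarith [sq_nonneg (ω k * ((p0 k - φ0) - (p k - φ)))]
    simp only [xhat, x]
    linarith
  have hz : zhat k ≤ z k := by
    have h1 : (∑ j, (2 * (star (f0 j) ⬝ᵥ (M k).mulVec (f j)).re - Q k (f0 j)))
        ≤ ∑ j, Q k (f j) :=
      Finset.sum_le_sum fun j _ => hcross (f0 j) (f j)
    have hd : (0:ℝ) ≤ ψ k / (4 * ξ k) := by have := hψ k; have := hξ k; positivity
    have he : ψ k / (2 * ξ k) = 2 * (ψ k / (4 * ξ k)) := by
      have h4 : ξ k ≠ 0 := (hξ k).ne'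
      field_simp
      ring
    have h2 : -(ψ k / (4 * ξ k)) * (q0 k - φ0) ^ 2
        + (ψ k / (2 * ξ k)) * (q0 k - φ0) * (q k - φ)
        ≤ (ψ k / (4 * ξ k)) * (q k - φ) ^ 2 := by
      rw [he]
      nlinarith [mul_nonneg hd (sq_nonneg ((q0 k - φ0) - (q k - φ)))]
    simp only [zhat, z]
    linarith
  obtain ⟨h1, h2⟩ := hfeas k
  exact ⟨by linarith, by linarith⟩
end
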